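/- (Reidemeister III move on Gauss codes, second connectivity, preserves parity.) Let i, j, k be distinct labels and let G = P ++ [(i,u,+), (j,u,+)] ++ Q ++ [(j,o,+), (k,o,+)] ++ R ++ [(i,o,+), (k,u,+)] ++ S be a signed Gauss code in which the labels i, j, k occur only in the three displayed adjacent pairs. Let G' = P ++ [(j,u,+), (i,u,+)] ++ Q ++ [(k,o,+), (j,o,+)] ++ R ++ [(k,u,+), (i,o,+)] ++ S be obtained by swapping each of the three adjacent pairs. Then every crossing of G (including i, j, and k) has the same parity in G' as in G. -/

import Mathlib

/-- The marker recording whether an entry of a Gauss code lies on the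
understrand (`u`) or overstrand (`o`) of the crossing. -/
inductive Strand : Type
  | u : Strand
  | o : Strand
deriving DecidableEq

/-- The sign of a crossing. -/
inductive GSign : Type
  | pos : GSign
  | neg : GSign
deriving DecidableEq

/-- An entry `(ℓ, m, ε)` of a signed Gauss code: a label, a strand marker, and a sign.
A signed Gauss code is a `List (GaussEntry L)`. -/
abbrev GaussEntry (L : Type u) : Type u := L × Strand × GSign

/-- A label `ℓ` is a crossing of the signed Gauss code `G` if it occurs in exactly two
entries of `G`, once with marker `u` and once with marker `o`, both with the same sign. -/
def IsCrossing {L : Type u} [DecidableEq L] (G : List (GaussEntry L)) (ℓ : L) : Prop :=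
  G.countP (fun e => decide (e.1 = ℓ)) = 2 ∧
  ∃ ε : GSign, (ℓ, Strand.u, ε) ∈ G ∧ (ℓ, Strand.o, ε) ∈ G

/-- The number of entries of `G` lying strictly between the two occurrences of the
label `ℓ` (for `ℓ` occurring exactly twice in `G`). -/
def betweenCount {L : Type u} [DecidableEq L] (G : List (GaussEntry L)) (ℓ : L) : ℕ :=
  (G.drop (G.findIdx (fun e => decide (e.1 = ℓ)) + 1)).findIdx (fun e => decide (e.1 = ℓ))

/-- The parity of the crossing `ℓ` in `G`: the residue mod 2 of the number of entries of
`G` lying strictly between the two occurrences of `ℓ` (`0` = even, `1` = odd). -/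
def crossingParity {L : Type u} [DecidableEq L] (G : List (GaussEntry L)) (ℓ : L) : ℕ :=
  betweenCount G ℓ % 2

lemma findIdx_append_false {α : Type*} (p : α → Bool) (l₁ l₂ : List α)
    (h : ∀ x ∈ l₁, p x = false) :
    (l₁ ++ l₂).findIdx p = l₁.length + l₂.findIdx p := by
  induction l₁ with
  | nil => simp
  | cons a l ih =>
    have ha : p a = false := h a List.mem_cons_self
    simp only [List.cons_append, List.findIdx_cons, ha, cond_false,
      ih (fun x hx => h x (List.mem_cons_of_mem a hx)), List.length_cons]
    omega

lemma betweenCount_shape {L : Type*} [DecidableEq L] (l₁ l₂ l₃ : List (GaussEntry L))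
    (x y : GaussEntry L) (ℓ : L)
    (h₁ : ∀ e ∈ l₁, e.1 ≠ ℓ) (h₂ : ∀ e ∈ l₂, e.1 ≠ ℓ)
    (hx : x.1 = ℓ) (hy : y.1 = ℓ) :
    betweenCount (l₁ ++ x :: (l₂ ++ y :: l₃)) ℓ = l₂.length := by
  set p : GaussEntry L → Bool := fun e => decide (e.1 = ℓ) with hp
  have hp1 : ∀ e ∈ l₁, p e = false := fun e he => by simp [hp, h₁ e he]
  have hp2 : ∀ e ∈ l₂, p e = false := fun e he => by simp [hp, h₂ e he]
  have hpx : p x = true := by simp [hp, hx]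
  have hpy : p y = true := by simp [hp, hy]
  unfold betweenCount
  rw [findIdx_append_false p l₁ _ hp1, List.findIdx_cons, hpx]
  simp only [cond_true, Nat.add_zero]
  rw [show l₁.length + 1 = l₁.length + 1 from rfl, List.drop_length_add_append 1]
  simp only [List.drop_succ_cons, List.drop_zero]
  rw [findIdx_append_false p l₂ _ hp2, List.findIdx_cons, hpy]
  simp

lemma findIdx_eq_of_map_eq {α : Type*} {p : α → Bool} :
    ∀ {l₁ l₂ : List α}, l₁.map p = l₂.map p → l₁.findIdx p = l₂.findIdx p := by
  intro l₁
  induction l₁ with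
  | nil => intro l₂ h; cases l₂ <;> simp_all
  | cons a l ih =>
    intro l₂ h
    cases l₂ with
    | nil => simp at h
    | cons b m =>
      simp only [List.map_cons, List.cons.injEq] at h
      rw [List.findIdx_cons, List.findIdx_cons, h.1, ih h.2]

lemma betweenCount_congr {L : Type*} [DecidableEq L] (G G' : List (GaussEntry L)) (ℓ : L)
    (h : G.map (fun e => decide (e.1 = ℓ)) = G'.map (fun e => decide (e.1 = ℓ))) :
    betweenCount G ℓ = betweenCount G' ℓ := by
  unfold betweenCount
  rw [findIdx_eq_of_map_eq h]
  apply findIdx_eq_of_map_eq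
  rw [List.map_drop, List.map_drop, h]

/-- (Reidemeister III on Gauss codes, second connectivity, preserves parity.)
Swapping the three adjacent pairs in
`G = P ++ [iᵤ⁺, jᵤ⁺] ++ Q ++ [jₒ⁺, kₒ⁺] ++ R ++ [iₒ⁺, kᵤ⁺] ++ S`
(with `i, j, k` distinct and occurring only in the displayed pairs) preserves the parity
of every crossing of `G`, including `i`, `j` and `k`. -/
theorem reidemeister_III_second_connectivity_preserves_parity {L : Type*} [DecidableEq L]
    (P Q R S : List (GaussEntry L)) (i j k : L)
    (hij : i ≠ j) (hik : i ≠ k) (hjk : j ≠ k)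
    (hfresh : ∀ e ∈ P ++ Q ++ R ++ S, e.1 ≠ i ∧ e.1 ≠ j ∧ e.1 ≠ k)
    (G G' : List (GaussEntry L))
    (hG : G = P ++ [(i, Strand.u, GSign.pos), (j, Strand.u, GSign.pos)] ++ Q
            ++ [(j, Strand.o, GSign.pos), (k, Strand.o, GSign.pos)] ++ R
            ++ [(i, Strand.o, GSign.pos), (k, Strand.u, GSign.pos)] ++ S)
    (hG' : G' = P ++ [(j, Strand.u, GSign.pos), (i, Strand.u, GSign.pos)] ++ Q
            ++ [(k, Strand.o, GSign.pos), (j, Strand.o, GSign.pos)] ++ R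
            ++ [(k, Strand.u, GSign.pos), (i, Strand.o, GSign.pos)] ++ S) :
    (∀ ℓ : L, IsCrossing G ℓ → crossingParity G' ℓ = crossingParity G ℓ) ∧
    crossingParity G' i = crossingParity G i ∧
    crossingParity G' j = crossingParity G j ∧
    crossingParity G' k = crossingParity G k := by
  have hP : ∀ e ∈ P, e.1 ≠ i ∧ e.1 ≠ j ∧ e.1 ≠ k := fun e he => hfresh e (by simp [he])
  have hQ : ∀ e ∈ Q, e.1 ≠ i ∧ e.1 ≠ j ∧ e.1 ≠ k := fun e he => hfresh e (by simp [he])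
  have hR : ∀ e ∈ R, e.1 ≠ i ∧ e.1 ≠ j ∧ e.1 ≠ k := fun e he => hfresh e (by simp [he])
  have hS : ∀ e ∈ S, e.1 ≠ i ∧ e.1 ≠ j ∧ e.1 ≠ k := fun e he => hfresh e (by simp [he])
  -- betweenCount of i in G
  have bGi : betweenCount G i = Q.length + R.length + 3 := by
    have := betweenCount_shape P
      ((j, Strand.u, GSign.pos) :: (Q ++ (j, Strand.o, GSign.pos) ::
        (k, Strand.o, GSign.pos) :: R))
      ((k, Strand.u, GSign.pos) :: S)
      (i, Strand.u, GSign.pos) (i, Strand.o, GSign.pos) i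
      (fun e he => (hP e he).1)
      (by
        intro e he
        simp only [List.mem_cons, List.mem_append, List.not_mem_nil, or_false] at he
        rcases he with h | h | h | h | h
        · subst h; exact hij.symm
        · exact (hQ e h).1
        · subst h; exact hij.symm
        · subst h; exact hik.symm
        · exact (hR e h).1) rfl rfl
    rw [hG]
    simp only [List.append_assoc, List.cons_append, List.nil_append] at this ⊢
    rw [this]
    simp
    omega
  have bG'i : betweenCount G' i = Q.length + R.length + 3 := by
    have := betweenCount_shape (P ++ [(j, Strand.u, GSign.pos)])
      (Q ++ (k, Strand.o, GSign.pos) :: (j, Strand.o, GSign.pos) ::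
        (R ++ [(k, Strand.u, GSign.pos)]))
      S
      (i, Strand.u, GSign.pos) (i, Strand.o, GSign.pos) i
      (by
        intro e he
        simp only [List.mem_append, List.mem_singleton, List.mem_cons, List.not_mem_nil, or_false] at he
        rcases he with h | h
        · exact (hP e h).1
        · subst h; exact hij.symm)
      (by
        intro e he
        simp only [List.mem_cons, List.mem_append, List.mem_singleton, List.not_mem_nil, or_false] at he
        rcases he with h | h | h | h | h
        · exact (hQ e h).1
        · subst h; exact hik.symm
        · subst h; exact hij.symm
        · exact (hR e h).1
        · subst h; exact hik.symm) rfl rfl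
    rw [hG']
    simp only [List.append_assoc, List.cons_append, List.nil_append] at this ⊢
    rw [this]
    simp
    omega
  -- betweenCount of j
  have bGj : betweenCount G j = Q.length := by
    have := betweenCount_shape (P ++ [(i, Strand.u, GSign.pos)]) Q
      ((k, Strand.o, GSign.pos) :: (R ++ (i, Strand.o, GSign.pos) ::
        (k, Strand.u, GSign.pos) :: S))
      (j, Strand.u, GSign.pos) (j, Strand.o, GSign.pos) j
      (by
        intro e he
        simp only [List.mem_append, List.mem_singleton, List.mem_cons, List.not_mem_nil, or_false] at he
        rcases he with h | h
        · exact (hP e h).2.1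
        · subst h; exact hij)
      (fun e he => (hQ e he).2.1) rfl rfl
    rw [hG]
    simp only [List.append_assoc, List.cons_append, List.nil_append] at this ⊢
    rw [this]
  have bG'j : betweenCount G' j = Q.length + 2 := by
    have := betweenCount_shape P
      ((i, Strand.u, GSign.pos) :: (Q ++ [(k, Strand.o, GSign.pos)]))
      (R ++ (k, Strand.u, GSign.pos) :: (i, Strand.o, GSign.pos) :: S)
      (j, Strand.u, GSign.pos) (j, Strand.o, GSign.pos) j
      (fun e he => (hP e he).2.1)
      (by
        intro e he
        simp only [List.mem_cons, List.mem_append, List.mem_singleton, List.not_mem_nil, or_false] at he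
        rcases he with h | h | h
        · subst h; exact hij
        · exact (hQ e h).2.1
        · subst h; exact hjk.symm) rfl rfl
    rw [hG']
    simp only [List.append_assoc, List.cons_append, List.nil_append] at this ⊢
    rw [this]
    simp
  -- betweenCount of k
  have bGk : betweenCount G k = R.length + 1 := by
    have := betweenCount_shape
      (P ++ (i, Strand.u, GSign.pos) :: (j, Strand.u, GSign.pos) ::
        (Q ++ [(j, Strand.o, GSign.pos)]))
      (R ++ [(i, Strand.o, GSign.pos)]) S
      (k, Strand.o, GSign.pos) (k, Strand.u, GSign.pos) k
      (by
        intro e he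
        simp only [List.mem_cons, List.mem_append, List.mem_singleton, List.not_mem_nil, or_false] at he
        rcases he with h | h | h | h | h
        · exact (hP e h).2.2
        · subst h; exact hik
        · subst h; exact hjk
        · exact (hQ e h).2.2
        · subst h; exact hjk)
      (by
        intro e he
        simp only [List.mem_append, List.mem_singleton, List.mem_cons, List.not_mem_nil, or_false] at he
        rcases he with h | h
        · exact (hR e h).2.2
        · subst h; exact hik) rfl rfl
    rw [hG]
    simp only [List.append_assoc, List.cons_append, List.nil_append] at this ⊢
    rw [this]
    simp
  have bG'k : betweenCount G' k = R.length + 1 := by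
    have := betweenCount_shape
      (P ++ (j, Strand.u, GSign.pos) :: (i, Strand.u, GSign.pos) :: Q)
      ((j, Strand.o, GSign.pos) :: R)
      ((i, Strand.o, GSign.pos) :: S)
      (k, Strand.o, GSign.pos) (k, Strand.u, GSign.pos) k
      (by
        intro e he
        simp only [List.mem_cons, List.mem_append, List.not_mem_nil, or_false] at he
        rcases he with h | h | h | h
        · exact (hP e h).2.2
        · subst h; exact hjk
        · subst h; exact hik
        · exact (hQ e h).2.2)
      (by
        intro e he
        simp only [List.mem_cons] at he
        rcases he with h | h
        · subst h; exact hjk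
        · exact (hR e h).2.2) rfl rfl
    rw [hG']
    simp only [List.append_assoc, List.cons_append, List.nil_append] at this ⊢
    rw [this]
    simp
  have pi : crossingParity G' i = crossingParity G i := by
    unfold crossingParity; rw [bGi, bG'i]
  have pj : crossingParity G' j = crossingParity G j := by
    unfold crossingParity; rw [bGj, bG'j]; omega
  have pk : crossingParity G' k = crossingParity G k := by
    unfold crossingParity; rw [bGk, bG'k]
  refine ⟨?_, pi, pj, pk⟩
  intro ℓ _
  by_cases h1 : ℓ = i
  · subst h1; exact pi
  by_cases h2 : ℓ = j
  · subst h2; exact pj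
  by_cases h3 : ℓ = k
  · subst h3; exact pk
  have n1 : i ≠ ℓ := fun h => h1 h.symm
  have n2 : j ≠ ℓ := fun h => h2 h.symm
  have n3 : k ≠ ℓ := fun h => h3 h.symm
  unfold crossingParity
  rw [betweenCount_congr G' G ℓ (by simp [hG, hG', n1, n2, n3])]
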